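/- arXiv:2406.17524 — 5 statements merged into one kernel-verified Lean document; each statement's English description precedes it below -/
import Mathlib

section
/- For all real numbers v and z, |vz + z − v − 2| ≤ max{|v² − 2|, |z² − 2|, |vz + 2z − 2v − 2|}. -/
/-!
Write `F₁, F₂, F₃, F₄` for the four polynomials. The differences `F₄ - F₃ = v - z`,
`F₄ - F₂ = (v - z)(z - 1)` and `F₄ - F₁ = (z - v)(v + 1)` show that `F₄` lies below one of
`F₁, F₂, F₃`, and above one of them unless `v < -1 < 1 < z`. In that remaining quadrant put
`a = -1 - v ≥ 0`, `b = z - 1 ≥ 0`: then `-F₄ = 1 + ab` and `F₃ = 1 + a + b - ab`, so either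
`2ab ≤ a + b` and `-F₄ ≤ F₃`, or `a + b ≥ 2` (by AM-GM) and `-2F₄ ≤ F₁ + F₂`.
-/

section
variable {R : Type*} [CommRing R] [LinearOrder R] [IsStrictOrderedRing R]

lemma two_le_add_or_two_mul_le_add {a b : R} (ha : 0 ≤ a) (hb : 0 ≤ b) :
    2 ≤ a + b ∨ 2 * (a * b) ≤ a + b := by
  rcases le_or_gt 2 (a + b) with h | h
  · exact Or.inl h
  · right
    nlinarith [sq_nonneg (a - b)]

lemma le_max_polys (v z : R) :
    v * z + z - v - 2 ≤ max (v ^ 2 - 2) (max (z ^ 2 - 2) (v * z + 2 * z - 2 * v - 2)) := by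
  rcases le_total v z with hvz | hzv
  · exact le_max_of_le_right (le_max_of_le_right (by linarith))
  rcases le_total z 1 with hz1 | h1z
  · exact le_max_of_le_right (le_max_of_le_left
      (by nlinarith [mul_nonneg (sub_nonneg.2 hzv) (sub_nonneg.2 hz1)]))
  · exact le_max_of_le_left
      (by nlinarith [mul_nonneg (sub_nonneg.2 hzv) (by linarith : (0 : R) ≤ v + 1)])

lemma neg_le_of_le_neg_one_of_one_le {v z : R} (hv : v ≤ -1) (hz : 1 ≤ z) :
    -(v * z + z - v - 2) ≤ v * z + 2 * z - 2 * v - 2 ∨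
      -2 * (v * z + z - v - 2) ≤ (v ^ 2 - 2) + (z ^ 2 - 2) := by
  have ha : 0 ≤ -1 - v := by linarith
  have hb : 0 ≤ z - 1 := by linarith
  rcases two_le_add_or_two_mul_le_add ha hb with h | h
  · right; nlinarith [sq_nonneg (v + z)]
  · left; nlinarith

lemma neg_le_max_abs_polys (v z : R) :
    -(v * z + z - v - 2) ≤ max |v ^ 2 - 2| (max |z ^ 2 - 2| |v * z + 2 * z - 2 * v - 2|) := by
  set m := max |v ^ 2 - 2| (max |z ^ 2 - 2| |v * z + 2 * z - 2 * v - 2|)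
  have h₁ : -m ≤ v ^ 2 - 2 ∧ v ^ 2 - 2 ≤ m := abs_le.1 (le_max_left _ _)
  have h₂ : -m ≤ z ^ 2 - 2 ∧ z ^ 2 - 2 ≤ m :=
    abs_le.1 ((le_max_left _ _).trans (le_max_right _ _))
  have h₃ : -m ≤ v * z + 2 * z - 2 * v - 2 ∧ v * z + 2 * z - 2 * v - 2 ≤ m :=
    abs_le.1 ((le_max_right _ _).trans (le_max_right _ _))
  rcases le_total z v with hzv | hvz
  · linarith
  rcases le_total z 1 with hz1 | h1z
  · nlinarith [mul_nonneg (sub_nonneg.2 hvz) (sub_nonneg.2 hz1)]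
  rcases le_total (-1) v with h1v | hv1
  · nlinarith [mul_nonneg (sub_nonneg.2 hvz) (sub_nonneg.2 h1v)]
  rcases neg_le_of_le_neg_one_of_one_le hv1 h1z with h | h <;> linarith

end

/-- For all real `v`, `z`,
`|vz + z − v − 2| ≤ max {|v² − 2|, |z² − 2|, |vz + 2z − 2v − 2|}`. -/
theorem stmt_8 (v z : ℝ) :
    |v * z + z - v - 2| ≤
      max |v ^ 2 - 2| (max |z ^ 2 - 2| |v * z + 2 * z - 2 * v - 2|) :=
  abs_le'.2 ⟨(le_max_polys v z).trans
    (max_le_max (le_abs_self _) (max_le_max (le_abs_self _) (le_abs_self _))),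
    neg_le_max_abs_polys v z⟩
end

section
/- Let C and D be 2×2 complex matrices with tr(C) = tr(D) and det(C) = det(D) = 1, and suppose that the numbers (tr C)² and tr(CD) are real. Then ρ(CCCD) ≤ max{ρ(CCCC), ρ(CDCD), ρ(CCDD)}, where ρ denotes the spectral radius. -/
open Matrix

/-!
If `det M = 1` and `tr M` is real, the eigenvalues of `M` are `m, m⁻¹` with `m + m⁻¹ = tr M`;
they are either real or on the unit circle, so `ρ(M)` is the number `ρ ≥ 1` with
`ρ + ρ⁻¹ = max 2 |tr M|`, an increasing function of `|tr M|`. With `u = (tr C)²` and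
`z = tr (CD)`, Cayley–Hamilton gives the traces of `CCCD, CCCC, CDCD, CCDD` as the real numbers
`(u - 1) z - u`, `u² - 4u + 2`, `z² - 2`, `uz - 2u + 2`, and the claim reduces to an elementary
inequality between their absolute values.
-/

theorem two_le_add_inv {x : ℝ} (hx : 0 < x) : 2 ≤ x + x⁻¹ := by
  have hsq : x + x⁻¹ - 2 = (x - 1) ^ 2 / x := by field_simp; ring
  have : 0 ≤ (x - 1) ^ 2 / x := by positivity
  linarith

theorem abs_add_inv (x : ℝ) : |x + x⁻¹| = |x| + |x|⁻¹ := by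
  rw [← abs_inv, abs_add_eq_add_abs_iff]
  rcases le_total 0 x with h | h
  · exact Or.inl ⟨h, inv_nonneg.2 h⟩
  · exact Or.inr ⟨h, inv_nonpos.2 h⟩

theorem le_of_add_inv_le_add_inv {s t : ℝ} (hs : 1 ≤ s) (ht : 1 ≤ t)
    (h : s + s⁻¹ ≤ t + t⁻¹) : s ≤ t := by
  by_contra! hts
  have hpos : 0 < (s - t) * (1 - (s * t)⁻¹) :=
    mul_pos (by linarith) (sub_pos.2 (inv_lt_one_of_one_lt₀ (by nlinarith)))
  have hdiff : (s - t) * (1 - (s * t)⁻¹) = s + s⁻¹ - (t + t⁻¹) := by field_simp; ring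
  linarith

theorem max_self_inv_add_inv (x : ℝ) : max x x⁻¹ + (max x x⁻¹)⁻¹ = x + x⁻¹ := by
  rcases le_total x x⁻¹ with h | h
  · rw [max_eq_right h, inv_inv, add_comm]
  · rw [max_eq_left h]

theorem one_le_max_self_inv {x : ℝ} (hx : 0 < x) : 1 ≤ max x x⁻¹ := by
  rcases le_total 1 x with h | h
  · exact le_max_of_le_left h
  · exact le_max_of_le_right ((one_le_inv₀ hx).2 h)

theorem abs_sub_one_mul_sub_le_max (u z : ℝ) :
    |(u - 1) * z - u| ≤ max |u ^ 2 - 4 * u + 2| (max |z ^ 2 - 2| |u * z - 2 * u + 2|) := by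
  by_contra! h
  simp only [max_lt_iff, abs_lt] at h
  obtain ⟨⟨a1, a2⟩, ⟨b1, b2⟩, ⟨c1, c2⟩⟩ := h
  rcases abs_cases ((u - 1) * z - u) with ⟨hA, _⟩ | ⟨hA, _⟩ <;> rw [hA] at a1 a2 b1 b2 c1 c2
  · nlinarith [mul_pos (sub_pos.2 b2) (sub_pos.2 c2), sq_nonneg (u - 2 - z), sq_nonneg (u + z),
      mul_pos (sub_pos.2 a2) (sub_pos.2 c2)]
  · nlinarith [sq_nonneg (u - 2 - z), sq_nonneg (u + z - 2), sq_nonneg (z - 1), sq_nonneg (u - 1),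
      mul_pos (sub_pos.2 a1) (sub_pos.2 c1)]

namespace Complex

theorem im_eq_zero_or_norm_eq_one_of_add_inv_eq_ofReal {a : ℝ} {m : ℂ} (hm : m ≠ 0)
    (h : m + m⁻¹ = a) : m.im = 0 ∨ ‖m‖ = 1 := by
  have him := congrArg im h
  rw [add_im, inv_im, ofReal_im] at him
  have hn : normSq m ≠ 0 := (map_ne_zero normSq).2 hm
  have hprod : m.im * (normSq m - 1) = 0 := by field_simp at him; linear_combination him
  refine (mul_eq_zero.1 hprod).imp id fun h1 => ?_
  rw [← pow_eq_one_iff_of_nonneg (norm_nonneg m) two_ne_zero, ← normSq_eq_norm_sq]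
  linarith

theorem norm_add_inv_norm_eq_max {a : ℝ} {m : ℂ} (hm : m ≠ 0) (h : m + m⁻¹ = a) :
    ‖m‖ + ‖m‖⁻¹ = max 2 |a| := by
  have hpos : 0 < ‖m‖ := norm_pos_iff.2 hm
  have hle : |a| ≤ ‖m‖ + ‖m‖⁻¹ := by
    rw [← Real.norm_eq_abs, ← norm_real, ← h, ← norm_inv]
    exact norm_add_le _ _
  refine le_antisymm ?_ (max_le (two_le_add_inv hpos) hle)
  rcases im_eq_zero_or_norm_eq_one_of_add_inv_eq_ofReal hm h with him | hnorm
  · have hre : m = (m.re : ℂ) := ext rfl (by simp [him])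
    rw [hre] at h
    norm_cast at h
    rw [hre, norm_real, Real.norm_eq_abs, ← abs_add_inv, h]
    exact le_max_right _ _
  · rw [hnorm]
    norm_num

end Complex

namespace Matrix

theorem mem_spectrum_fin_two_iff {K : Type*} [Field K] (M : Matrix (Fin 2) (Fin 2) K) (x : K) :
    x ∈ spectrum K M ↔ x ^ 2 - M.trace * x + M.det = 0 := by
  simp [mem_spectrum_iff_isRoot_charpoly, charpoly_fin_two]

theorem ne_zero_of_mem_spectrum {n K : Type*} [Fintype n] [DecidableEq n] [Field K]
    {M : Matrix n n K} (hM : IsUnit M.det) {m : K} (hm : m ∈ spectrum K M) : m ≠ 0 :=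
  fun h => (spectrum.zero_notMem_iff K).2 ((isUnit_iff_isUnit_det M).2 hM) (h ▸ hm)

theorem trace_eq_add_inv_of_mem_spectrum_fin_two {K : Type*} [Field K]
    {M : Matrix (Fin 2) (Fin 2) K} (hM : M.det = 1) {m : K} (hm : m ∈ spectrum K M) :
    M.trace = m + m⁻¹ := by
  have hm0 := ne_zero_of_mem_spectrum (by simp [hM]) hm
  rw [mem_spectrum_fin_two_iff, hM] at hm
  field_simp
  linear_combination -hm

theorem spectrum_fin_two_of_det_eq_one {K : Type*} [Field K] {M : Matrix (Fin 2) (Fin 2) K}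
    (hM : M.det = 1) {m : K} (hm : m ∈ spectrum K M) : spectrum K M = {m, m⁻¹} := by
  have hm0 := ne_zero_of_mem_spectrum (by simp [hM]) hm
  have htr := trace_eq_add_inv_of_mem_spectrum_fin_two hM hm
  ext x
  have hfac : x ^ 2 - (m + m⁻¹) * x + 1 = (x - m) * (x - m⁻¹) := by field_simp; ring
  rw [mem_spectrum_fin_two_iff, hM, htr, hfac, mul_eq_zero, sub_eq_zero, sub_eq_zero,
    Set.mem_insert_iff, Set.mem_singleton_iff]

theorem spectralRadius_fin_two_of_det_eq_one {K : Type*} [NormedField K]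
    {M : Matrix (Fin 2) (Fin 2) K} (hM : M.det = 1) {m : K} (hm : m ∈ spectrum K M) :
    spectralRadius K M = ENNReal.ofReal (max ‖m‖ ‖m‖⁻¹) := by
  rw [spectralRadius, spectrum_fin_two_of_det_eq_one hM hm, iSup_insert, iSup_singleton,
    ENNReal.ofReal_max, ← norm_inv, ofReal_norm, ofReal_norm]
  rfl

theorem spectralRadius_le_of_abs_trace_le {M N : Matrix (Fin 2) (Fin 2) ℂ} (hM : M.det = 1)
    (hN : N.det = 1) {a b : ℝ} (ha : M.trace = a) (hb : N.trace = b) (hab : |a| ≤ |b|) :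
    spectralRadius ℂ M ≤ spectralRadius ℂ N := by
  obtain ⟨m, hm⟩ := spectrum.nonempty_of_isAlgClosed_of_finiteDimensional ℂ M
  obtain ⟨n, hn⟩ := spectrum.nonempty_of_isAlgClosed_of_finiteDimensional ℂ N
  have hm0 := ne_zero_of_mem_spectrum (by simp [hM]) hm
  have hn0 := ne_zero_of_mem_spectrum (by simp [hN]) hn
  have hMm := trace_eq_add_inv_of_mem_spectrum_fin_two hM hm
  have hNn := trace_eq_add_inv_of_mem_spectrum_fin_two hN hn
  rw [spectralRadius_fin_two_of_det_eq_one hM hm, spectralRadius_fin_two_of_det_eq_one hN hn]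
  refine ENNReal.ofReal_le_ofReal (le_of_add_inv_le_add_inv ?_ ?_ ?_)
  · exact one_le_max_self_inv (norm_pos_iff.2 hm0)
  · exact one_le_max_self_inv (norm_pos_iff.2 hn0)
  rw [max_self_inv_add_inv, max_self_inv_add_inv, Complex.norm_add_inv_norm_eq_max hm0 (hMm ▸ ha),
    Complex.norm_add_inv_norm_eq_max hn0 (hNn ▸ hb)]
  exact max_le_max le_rfl hab

variable {R : Type*} [CommRing R] (C D : Matrix (Fin 2) (Fin 2) R)

theorem trace_cube_mul_fin_two :
    (C * C * C * D).trace = (C.trace ^ 2 - C.det) * (C * D).trace - C.trace * C.det * D.trace := by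
  simp [trace_fin_two, mul_apply, Fin.sum_univ_two, det_fin_two]
  ring

theorem trace_pow_four_fin_two :
    (C * C * C * C).trace = C.trace ^ 4 - 4 * C.trace ^ 2 * C.det + 2 * C.det ^ 2 := by
  simp [trace_fin_two, mul_apply, Fin.sum_univ_two, det_fin_two]
  ring

theorem trace_mul_sq_fin_two :
    (C * D * C * D).trace = (C * D).trace ^ 2 - 2 * (C.det * D.det) := by
  simp [trace_fin_two, mul_apply, Fin.sum_univ_two, det_fin_two]
  ring

theorem trace_sq_mul_sq_fin_two :
    (C * C * D * D).trace = C.trace * D.trace * (C * D).trace - C.trace ^ 2 * D.det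
      - D.trace ^ 2 * C.det + 2 * (C.det * D.det) := by
  simp [trace_fin_two, mul_apply, Fin.sum_univ_two, det_fin_two]
  ring

end Matrix

/-- Let `C`, `D` be 2×2 complex matrices with `tr C = tr D` and
`det C = det D = 1`, such that `(tr C)²` and `tr (CD)` are real. Then
`ρ(CCCD) ≤ max {ρ(CCCC), ρ(CDCD), ρ(CCDD)}`. -/
theorem stmt_14 (C D : Matrix (Fin 2) (Fin 2) ℂ)
    (htr : C.trace = D.trace) (hC : C.det = 1) (hD : D.det = 1)
    (hu : ∃ u : ℝ, C.trace ^ 2 = (u : ℂ))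
    (hz : ∃ z : ℝ, (C * D).trace = (z : ℂ)) :
    spectralRadius ℂ (C * C * C * D) ≤
      max (spectralRadius ℂ (C * C * C * C))
        (max (spectralRadius ℂ (C * D * C * D))
          (spectralRadius ℂ (C * C * D * D))) := by
  obtain ⟨u, hu⟩ := hu
  obtain ⟨z, hz⟩ := hz
  have hCCCD : (C * C * C * D).trace = (((u - 1) * z - u : ℝ) : ℂ) := by
    rw [trace_cube_mul_fin_two, hC, ← htr, hz]
    push_cast
    linear_combination ((z : ℂ) - 1) * hu
  have hCCCC : (C * C * C * C).trace = ((u ^ 2 - 4 * u + 2 : ℝ) : ℂ) := by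
    rw [trace_pow_four_fin_two, hC]
    push_cast
    linear_combination (C.trace ^ 2 + (u : ℂ) - 4) * hu
  have hCDCD : (C * D * C * D).trace = ((z ^ 2 - 2 : ℝ) : ℂ) := by
    rw [trace_mul_sq_fin_two, hz, hC, hD]
    push_cast
    ring
  have hCCDD : (C * C * D * D).trace = ((u * z - 2 * u + 2 : ℝ) : ℂ) := by
    rw [trace_sq_mul_sq_fin_two, ← htr, hz, hC, hD]
    push_cast
    linear_combination ((z : ℂ) - 2) * hu
  have hdet : (C * C * C * D).det = 1 := by simp [hC, hD]
  rcases le_max_iff.1 (abs_sub_one_mul_sub_le_max u z) with h | h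
  · exact (spectralRadius_le_of_abs_trace_le hdet (by simp [hC]) hCCCD hCCCC h).trans
      (le_max_left _ _)
  rcases le_max_iff.1 h with h | h
  · exact (spectralRadius_le_of_abs_trace_le hdet (by simp [hC, hD]) hCCCD hCDCD h).trans
      ((le_max_left _ _).trans (le_max_right _ _))
  · exact (spectralRadius_le_of_abs_trace_le hdet (by simp [hC, hD]) hCCCD hCCDD h).trans
      ((le_max_right _ _).trans (le_max_right _ _))
end

section
/- Let A and B be arbitrary real 2×2 matrices. Then ρ(AABABABB) ≤ max{ρ(ABABABAB), ρ(AABBAABB), ρ(AABABBAB)}, where ρ denotes the spectral radius and each expression is the product of the matrices A and B in the indicated order. -/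
/-!
With `P = tr (ABAB)`, `Q = tr (AABB)` and `D = det A det B`, the traces of the four words are
polynomials in `P`, `Q`, `D`, and they satisfy the identity
`2 tr(AABABABB)² = tr(ABABABAB) tr(AABBAABB) + tr(AABABBAB)²`,
so `|tr(AABABABB)|` is at most the largest of the other three absolute traces.
All four words have the same determinant `D⁴ ≥ 0`, and for real `2 × 2` matrices with a common
nonnegative determinant the spectral radius is monotone in the absolute value of the trace.
-/

open Matrix
open scoped ENNReal

/-- The spectral radius of a real 2×2 matrix: the maximum of the moduli of its
complex eigenvalues, obtained by viewing the matrix as a complex matrix. -/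
noncomputable def rho (A : Matrix (Fin 2) (Fin 2) ℝ) : ℝ≥0∞ :=
  spectralRadius ℂ (A.map (Complex.ofReal))

open ComplexConjugate

lemma abs_le_max_of_two_mul_sq_eq {x y z w : ℝ} (h : 2 * x ^ 2 = y * z + w ^ 2) :
    |x| ≤ max |y| (max |z| |w|) := by
  set m := max |y| (max |z| |w|)
  have hy : |y| ≤ m := le_max_left _ _
  have hz : |z| ≤ m := (le_max_left _ _).trans (le_max_right _ _)
  have hw : |w| ≤ m := (le_max_right _ _).trans (le_max_right _ _)
  have hm : 0 ≤ m := (abs_nonneg y).trans hy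
  have hyz : y * z ≤ m ^ 2 := by
    calc y * z ≤ |y| * |z| := by rw [← abs_mul]; exact le_abs_self _
      _ ≤ m ^ 2 := by rw [sq]; exact mul_le_mul hy hz (abs_nonneg z) hm
  have hw2 : w ^ 2 ≤ m ^ 2 := sq_le_sq' (neg_le_of_abs_le hw) (le_of_abs_le hw)
  exact abs_le_of_sq_le_sq (by linarith) hm

lemma norm_le_max_of_sq_sub_mul_add_eq_zero {z : ℂ} {s a b : ℝ} (ha : 0 ≤ a) (hb : 0 ≤ b)
    (hs : |s| ≤ a + b) (hz : z ^ 2 - s * z + (a * b : ℝ) = 0) : ‖z‖ ≤ max a b := by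
  have hz' : conj z ^ 2 - s * conj z + (a * b : ℝ) = 0 := by
    simpa using congrArg conj hz
  -- either `z` is real, or `z` and `conj z` are the two roots
  have : (conj z - z) * (conj z + z - s) = 0 := by linear_combination hz' - hz
  rcases mul_eq_zero.1 this with hreal | hpair
  · obtain ⟨x, rfl⟩ := Complex.conj_eq_iff_real.1 (sub_eq_zero.1 hreal)
    have hx : x ^ 2 - s * x + a * b = 0 := by exact_mod_cast hz
    have hsx : s * x ≤ (a + b) * |x| := by
      calc s * x ≤ |s| * |x| := by rw [← abs_mul]; exact le_abs_self _
        _ ≤ (a + b) * |x| := mul_le_mul_of_nonneg_right hs (abs_nonneg _)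
    rw [Complex.norm_real, Real.norm_eq_abs]
    by_contra! hlt
    nlinarith [sq_abs x, (le_max_left a b).trans_lt hlt, (le_max_right a b).trans_lt hlt]
  · have hnorm : ‖z‖ ^ 2 = a * b := by
      have : (Complex.normSq z : ℂ) = (a * b : ℝ) := by
        rw [← Complex.mul_conj]; linear_combination (-1 : ℂ) * hz + z * hpair
      rw [← Complex.normSq_eq_norm_sq]; exact_mod_cast this
    have hm : 0 ≤ max a b := ha.trans (le_max_left a b)
    refine le_of_sq_le_sq ?_ hm
    rw [hnorm, sq]
    exact mul_le_mul (le_max_left a b) (le_max_right a b) hb hm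

lemma mem_spectrum_map_ofReal_iff (M : Matrix (Fin 2) (Fin 2) ℝ) {z : ℂ} :
    z ∈ spectrum ℂ (M.map Complex.ofReal) ↔ z ^ 2 - M.trace * z + M.det = 0 := by
  rw [mem_spectrum_iff_isRoot_charpoly,
    show M.map Complex.ofReal = M.map Complex.ofRealHom from rfl, charpoly_map, charpoly_fin_two]
  simp

lemma exists_sq_sub_mul_add_eq_zero {K : Type*} [Field K] [IsAlgClosed K] [NeZero (2 : K)]
    (s d : K) : ∃ z : K, z ^ 2 - s * z + d = 0 := by
  obtain ⟨z, hz⟩ :=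
    exists_quadratic_eq_zero one_ne_zero (IsAlgClosed.exists_eq_mul_self (discrim 1 (-s) d))
  exact ⟨z, by linear_combination hz⟩

lemma rho_le_rho_of_abs_trace_le {M N : Matrix (Fin 2) (Fin 2) ℝ} (hdet : M.det = N.det)
    (hN : 0 ≤ N.det) (htr : |M.trace| ≤ |N.trace|) : rho M ≤ rho N := by
  have hN_root : ∀ k : ℂ, k ^ 2 - N.trace * k + N.det = 0 → (‖k‖₊ : ℝ≥0∞) ≤ rho N :=
    fun k hk => le_iSup₂_of_le (f := fun k _ => (‖k‖₊ : ℝ≥0∞)) k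
      ((mem_spectrum_map_ofReal_iff N).2 hk) le_rfl
  obtain ⟨l, hl⟩ := exists_sq_sub_mul_add_eq_zero (N.trace : ℂ) N.det
  set l' : ℂ := N.trace - l
  have hl' : l' ^ 2 - N.trace * l' + N.det = 0 := by linear_combination hl
  have hprod : ‖l‖ * ‖l'‖ = N.det := by
    rw [← norm_mul, show l * l' = N.det by linear_combination -hl, Complex.norm_real,
      Real.norm_of_nonneg hN]
  have hsum : |N.trace| ≤ ‖l‖ + ‖l'‖ := by
    rw [← Real.norm_eq_abs, ← Complex.norm_real, show (N.trace : ℂ) = l + l' by ring]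
    exact norm_add_le _ _
  refine iSup₂_le fun z hz => ?_
  rw [mem_spectrum_map_ofReal_iff, hdet, ← hprod] at hz
  rcases le_max_iff.1 (norm_le_max_of_sq_sub_mul_add_eq_zero (norm_nonneg l) (norm_nonneg l')
    (htr.trans hsum) (by exact_mod_cast hz)) with h | h
  · exact (ENNReal.coe_le_coe.2 h).trans (hN_root l hl)
  · exact (ENNReal.coe_le_coe.2 h).trans (hN_root l' hl')

section Words

variable (A B : Matrix (Fin 2) (Fin 2) ℝ)

lemma trace_ABABABAB :
    trace (A * B * A * B * A * B * A * B) =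
      trace (A * B * A * B) ^ 2 - 2 * (det A * det B) ^ 2 := by
  rw [eta_fin_two A, eta_fin_two B]
  simp only [mul_fin_two, trace_fin_two_of, det_fin_two_of]
  ring

lemma trace_AABBAABB :
    trace (A * A * B * B * A * A * B * B) =
      trace (A * A * B * B) ^ 2 - 2 * (det A * det B) ^ 2 := by
  rw [eta_fin_two A, eta_fin_two B]
  simp only [mul_fin_two, trace_fin_two_of, det_fin_two_of]
  ring

lemma trace_AABABABB :
    trace (A * A * B * A * B * A * B * B) =
      trace (A * B * A * B) * trace (A * A * B * B)
        - det A * det B * (trace (A * B * A * B) - trace (A * A * B * B))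
        - 2 * (det A * det B) ^ 2 := by
  rw [eta_fin_two A, eta_fin_two B]
  simp only [mul_fin_two, trace_fin_two_of, det_fin_two_of]
  ring

lemma trace_AABABBAB :
    trace (A * A * B * A * B * B * A * B) =
      trace (A * B * A * B) * trace (A * A * B * B)
        - 2 * (det A * det B) * (trace (A * B * A * B) - trace (A * A * B * B))
        - 2 * (det A * det B) ^ 2 := by
  rw [eta_fin_two A, eta_fin_two B]
  simp only [mul_fin_two, trace_fin_two_of, det_fin_two_of]
  ring

lemma two_mul_trace_AABABABB_sq :
    2 * trace (A * A * B * A * B * A * B * B) ^ 2 =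
      trace (A * B * A * B * A * B * A * B) * trace (A * A * B * B * A * A * B * B)
        + trace (A * A * B * A * B * B * A * B) ^ 2 := by
  rw [trace_AABABABB, trace_ABABABAB, trace_AABBAABB, trace_AABABBAB]
  ring

end Words

/-- For arbitrary real 2×2 matrices `A`, `B`,
`ρ(AABABABB) ≤ max {ρ(ABABABAB), ρ(AABBAABB), ρ(AABABBAB)}`. -/
theorem stmt_15 (A B : Matrix (Fin 2) (Fin 2) ℝ) :
    rho (A * A * B * A * B * A * B * B) ≤
      max (rho (A * B * A * B * A * B * A * B))
        (max (rho (A * A * B * B * A * A * B * B))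
          (rho (A * A * B * A * B * B * A * B))) := by
  have d₀ : det (A * A * B * A * B * A * B * B) = (det A * det B) ^ 4 := by
    simp only [det_mul]; ring
  have d₁ : det (A * B * A * B * A * B * A * B) = (det A * det B) ^ 4 := by
    simp only [det_mul]; ring
  have d₂ : det (A * A * B * B * A * A * B * B) = (det A * det B) ^ 4 := by
    simp only [det_mul]; ring
  have d₃ : det (A * A * B * A * B * B * A * B) = (det A * det B) ^ 4 := by
    simp only [det_mul]; ring
  obtain h | h | h : _ ∨ _ ∨ _ := by
    simpa only [le_max_iff] using abs_le_max_of_two_mul_sq_eq (two_mul_trace_AABABABB_sq A B)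
  · exact (rho_le_rho_of_abs_trace_le (by rw [d₀, d₁]) (by rw [d₁]; positivity) h).trans
      (le_max_left _ _)
  · exact (rho_le_rho_of_abs_trace_le (by rw [d₀, d₂]) (by rw [d₂]; positivity) h).trans
      ((le_max_left _ _).trans (le_max_right _ _))
  · exact (rho_le_rho_of_abs_trace_le (by rw [d₀, d₃]) (by rw [d₃]; positivity) h).trans
      ((le_max_right _ _).trans (le_max_right _ _))
end

section
/- For every choice of parameters R ∈ (0,1) and h₁, h₂ ∈ ℝ of a double rotation f, there is no orbit segment x₁, x₂, …, x₈ in [0,1) with x_{i+1} = f(x_i) for i = 1,…,7 such that x₁, x₃, x₅, x₆ ∈ [0,R) and x₂, x₄, x₇, x₈ ∈ [R,1). Equivalently, the binary word 12121122 cannot be produced by any double rotation. -/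
/-!
Write `≡` for congruence mod 1. A point of `[0,R)` and a point of `[R,1)` differ by a number in
`(0,1)`, and two such differences that are congruent are equal. Applied to the pairs
`(x₀,x₁), (x₂,x₃)` (displacement `h₁`), `(x₂,x₁), (x₄,x₃)` (displacement `-h₂`) and
`(x₀,x₃), (x₄,x₇)` (displacement `2h₁ + h₂`), this forces `x₇ - x₃ = x₄ - x₀ = 2 (x₂ - x₀)`.
Now `N = (x₂ - x₀) - (x₅ - x₃)` is `≡ 0`, both differences being `≡ h₁ + h₂`, while
`2N = (x₃ - x₅) + (x₇ - x₅)` is a sum of two numbers in `(0,1)`; so `N ∈ (0,1)`, a contradiction.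
-/

/-- The double rotation with parameters `R`, `h₁`, `h₂`: rotate by `h₁` if
`x < R` and by `h₂` otherwise, where `Int.fract` is the fractional part. -/
noncomputable def doubleRotation (R h₁ h₂ : ℝ) (x : ℝ) : ℝ :=
  if x < R then Int.fract (x + h₁) else Int.fract (x + h₂)

open Set AddCommGroup

theorem AddCommGroup.ModEq.sub_add_sub {G : Type*} [AddCommGroup G] {p a b c u v : G}
    (hab : b - a ≡ u [PMOD p]) (hbc : c - b ≡ v [PMOD p]) : c - a ≡ u + v [PMOD p] := by
  simpa only [sub_add_sub_cancel'] using hab.add hbc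

theorem AddCommGroup.ModEq.eq_of_mem_Ico {α : Type*} [AddCommGroup α] [LinearOrder α]
    [IsOrderedAddMonoid α] [Archimedean α] {p c a b : α} (hp : 0 < p) (h : a ≡ b [PMOD p])
    (ha : a ∈ Ico c (c + p)) (hb : b ∈ Ico c (c + p)) : a = b := by
  rw [← (toIcoMod_eq_self hp).2 ha, ← (toIcoMod_eq_self hp).2 hb]
  exact h.toIcoMod_eq_toIcoMod hp

theorem Int.fract_modEq_one {α : Type*} [Ring α] [LinearOrder α] [FloorRing α] (y : α) :
    Int.fract y ≡ y [PMOD 1] :=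
  modEq_iff_zsmul'.2 ⟨⌊y⌋, by simp [Int.self_sub_fract]⟩

theorem sub_mem_Ioo_of_mem_Ico {α : Type*} [Field α] [LinearOrder α] [IsStrictOrderedRing α]
    {R p q : α} (hp : p ∈ Ico 0 R) (hq : q ∈ Ico R 1) : q - p ∈ Ioo 0 1 :=
  ⟨by linarith [hp.2, hq.1], by linarith [hp.1, hq.2]⟩

theorem eq_of_modEq_of_mem_Ioo {α : Type*} [Field α] [LinearOrder α] [IsStrictOrderedRing α]
    [Archimedean α] {a b : α} (h : a ≡ b [PMOD 1]) (ha : a ∈ Ioo 0 1) (hb : b ∈ Ioo 0 1) :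
    a = b :=
  h.eq_of_mem_Ico one_pos (c := 0) (by rw [zero_add]; exact Ioo_subset_Ico_self ha)
    (by rw [zero_add]; exact Ioo_subset_Ico_self hb)

section DoubleRotation

variable {R h₁ h₂ x : ℝ}

theorem doubleRotation_sub_modEq_of_lt (hx : x < R) :
    doubleRotation R h₁ h₂ x - x ≡ h₁ [PMOD 1] := by
  rw [doubleRotation, if_pos hx, sub_modEq_iff_modEq_add']
  exact Int.fract_modEq_one _

theorem doubleRotation_sub_modEq_of_le (hx : R ≤ x) :
    doubleRotation R h₁ h₂ x - x ≡ h₂ [PMOD 1] := by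
  rw [doubleRotation, if_neg hx.not_gt, sub_modEq_iff_modEq_add']
  exact Int.fract_modEq_one _

end DoubleRotation

theorem false_of_displacements_12121122 {R h₁ h₂ x₀ x₁ x₂ x₃ x₄ x₅ x₆ x₇ : ℝ}
    (d₀ : x₁ - x₀ ≡ h₁ [PMOD 1]) (d₁ : x₂ - x₁ ≡ h₂ [PMOD 1]) (d₂ : x₃ - x₂ ≡ h₁ [PMOD 1])
    (d₃ : x₄ - x₃ ≡ h₂ [PMOD 1]) (d₄ : x₅ - x₄ ≡ h₁ [PMOD 1]) (d₅ : x₆ - x₅ ≡ h₁ [PMOD 1])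
    (d₆ : x₇ - x₆ ≡ h₂ [PMOD 1])
    (m₀ : x₀ ∈ Ico 0 R) (m₁ : x₁ ∈ Ico R 1) (m₂ : x₂ ∈ Ico 0 R) (m₃ : x₃ ∈ Ico R 1)
    (m₄ : x₄ ∈ Ico 0 R) (m₅ : x₅ ∈ Ico 0 R) (m₇ : x₇ ∈ Ico R 1) : False := by
  have e₁ : x₁ - x₀ = x₃ - x₂ :=
    eq_of_modEq_of_mem_Ioo (d₀.trans d₂.symm) (sub_mem_Ioo_of_mem_Ico m₀ m₁)
      (sub_mem_Ioo_of_mem_Ico m₂ m₃)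
  have e₂ : x₁ - x₂ = x₃ - x₄ :=
    eq_of_modEq_of_mem_Ioo (by simpa only [neg_sub] using neg_modEq_neg.2 (d₁.trans d₃.symm))
      (sub_mem_Ioo_of_mem_Ico m₂ m₁) (sub_mem_Ioo_of_mem_Ico m₄ m₃)
  have e₃ : x₃ - x₀ = x₇ - x₄ := by
    refine eq_of_modEq_of_mem_Ioo ?_ (sub_mem_Ioo_of_mem_Ico m₀ m₃) (sub_mem_Ioo_of_mem_Ico m₄ m₇)
    have d₄₇ := (d₄.sub_add_sub d₅).sub_add_sub d₆
    rw [add_right_comm] at d₄₇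
    exact ((d₀.sub_add_sub d₁).sub_add_sub d₂).trans d₄₇.symm
  have hN : (x₂ - x₀) - (x₅ - x₃) ≡ 0 [PMOD 1] := by
    have d₃₅ := d₃.sub_add_sub d₄
    rw [add_comm] at d₃₅
    exact sub_modEq_zero.2 ((d₀.sub_add_sub d₁).trans d₃₅.symm)
  obtain ⟨h₃₅, h₃₅'⟩ := sub_mem_Ioo_of_mem_Ico m₅ m₃
  obtain ⟨h₇₅, h₇₅'⟩ := sub_mem_Ioo_of_mem_Ico m₅ m₇
  have hN₀ : (x₂ - x₀) - (x₅ - x₃) = 0 :=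
    hN.eq_of_mem_Ico one_pos (c := 0) ⟨by linarith, by linarith⟩ ⟨le_rfl, by norm_num⟩
  linarith

theorem stmt_17_general (R h₁ h₂ : ℝ) :
    ¬ ∃ x : Fin 8 → ℝ,
        (∀ i, x i ∈ Set.Ico (0 : ℝ) 1) ∧
        (∀ i : Fin 7, x i.succ = doubleRotation R h₁ h₂ (x i.castSucc)) ∧
        x 0 ∈ Set.Ico 0 R ∧ x 2 ∈ Set.Ico 0 R ∧ x 4 ∈ Set.Ico 0 R ∧
        x 5 ∈ Set.Ico 0 R ∧
        x 1 ∈ Set.Ico R 1 ∧ x 3 ∈ Set.Ico R 1 ∧ x 6 ∈ Set.Ico R 1 ∧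
        x 7 ∈ Set.Ico R 1 := by
  rintro ⟨x, -, hstep, m₀, m₂, m₄, m₅, m₁, m₃, m₆, m₇⟩
  have step₁ {i : Fin 7} (hi : x i.castSucc < R) : x i.succ - x i.castSucc ≡ h₁ [PMOD 1] :=
    hstep i ▸ doubleRotation_sub_modEq_of_lt hi
  have step₂ {i : Fin 7} (hi : R ≤ x i.castSucc) : x i.succ - x i.castSucc ≡ h₂ [PMOD 1] :=
    hstep i ▸ doubleRotation_sub_modEq_of_le hi
  exact false_of_displacements_12121122 (step₁ (i := 0) m₀.2) (step₂ (i := 1) m₁.1)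
    (step₁ (i := 2) m₂.2) (step₂ (i := 3) m₃.1) (step₁ (i := 4) m₄.2) (step₁ (i := 5) m₅.2)
    (step₂ (i := 6) m₆.1) m₀ m₁ m₂ m₃ m₄ m₅ m₇

/-- No double rotation has an orbit segment `x₁, …, x₈` in
`[0,1)` with `x₁, x₃, x₅, x₆ ∈ [0,R)` and `x₂, x₄, x₇, x₈ ∈ [R,1)`; i.e. the
binary word `12121122` cannot be produced by any double rotation. -/
theorem stmt_17 (R h₁ h₂ : ℝ) (hR0 : 0 < R) (hR1 : R < 1) :
    ¬ ∃ x : Fin 8 → ℝ,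
        (∀ i, x i ∈ Set.Ico (0 : ℝ) 1) ∧
        (∀ i : Fin 7, x i.succ = doubleRotation R h₁ h₂ (x i.castSucc)) ∧
        x 0 ∈ Set.Ico 0 R ∧ x 2 ∈ Set.Ico 0 R ∧ x 4 ∈ Set.Ico 0 R ∧
        x 5 ∈ Set.Ico 0 R ∧
        x 1 ∈ Set.Ico R 1 ∧ x 3 ∈ Set.Ico R 1 ∧ x 6 ∈ Set.Ico R 1 ∧
        x 7 ∈ Set.Ico R 1 :=
  stmt_17_general R h₁ h₂
end

section
/- For every choice of parameters R ∈ (0,1) and h₁, h₂ ∈ ℝ of a double rotation f, there is no orbit segment x₁, x₂, …, x₈ in [0,1) with x_{i+1} = f(x_i) for i = 1,…,7 such that x₂, x₄, x₇, x₈ ∈ [0,R) and x₁, x₃, x₅, x₆ ∈ [R,1). Equivalently, the binary word 21212211 cannot be produced by any double rotation. -/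
open Set

theorem AddCircle.eq_of_coe_eq_of_abs_sub_lt {𝕜 : Type*} [Field 𝕜] [LinearOrder 𝕜]
    [IsStrictOrderedRing 𝕜] {p a b : 𝕜} (h : (a : AddCircle p) = b) (hab : |a - b| < p) :
    a = b := by
  obtain ⟨n, hn⟩ := (AddCircle.coe_eq_zero_iff p).1
    (by rw [AddCircle.coe_sub, h, sub_self] : ((a - b : 𝕜) : AddCircle p) = 0)
  have hp : 0 < p := (abs_nonneg _).trans_lt hab
  rw [← hn, zsmul_eq_mul, abs_mul, abs_of_pos hp, mul_lt_iff_lt_one_left hp] at hab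
  have hn₀ : n = 0 := Int.abs_lt_one_iff.1 (by exact_mod_cast hab)
  rw [hn₀, zero_smul] at hn
  exact sub_eq_zero.1 hn.symm

theorem coe_doubleRotation_sub {R h₁ h₂ x y : ℝ} (h : x < R ↔ y < R) :
    ((doubleRotation R h₁ h₂ y - doubleRotation R h₁ h₂ x : ℝ) : UnitAddCircle) =
      (y - x : ℝ) := by
  by_cases hx : x < R
  · simp only [doubleRotation, if_pos hx, if_pos (h.1 hx), AddCircle.coe_sub,
      AddCircle.coe_fract, AddCircle.coe_add]
    abel
  · simp only [doubleRotation, if_neg hx, if_neg (h.not.1 hx), AddCircle.coe_sub,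
      AddCircle.coe_fract, AddCircle.coe_add]
    abel

theorem coe_orbit_succ_sub_succ {R h₁ h₂ : ℝ} {n : ℕ} {x : Fin (n + 1) → ℝ}
    (hx : ∀ i : Fin n, x i.succ = doubleRotation R h₁ h₂ (x i.castSucc)) (i j : Fin n)
    (h : x i.castSucc < R ↔ x j.castSucc < R) :
    ((x j.succ - x i.succ : ℝ) : UnitAddCircle) = (x j.castSucc - x i.castSucc : ℝ) := by
  rw [hx i, hx j]
  exact coe_doubleRotation_sub h

theorem one_sub_le_two_mul_abs_of_progression {R a b c d : ℝ} (ha : a ∈ Ico 0 R)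
    (hb : b ∈ Ico R 1) (hc : c ∈ Ico 0 R) (hab : (b : UnitAddCircle) = (a + d : ℝ))
    (hac : (c : UnitAddCircle) = (a + 2 * d : ℝ)) : 1 - R ≤ 2 * |d| := by
  by_contra! hd
  obtain ⟨ha₀, haR⟩ := ha
  obtain ⟨hbR, hb₁⟩ := hb
  obtain ⟨hc₀, hcR⟩ := hc
  rw [← abs_two, ← abs_mul, abs_lt] at hd
  have hc : c = a + 2 * d :=
    AddCircle.eq_of_coe_eq_of_abs_sub_lt hac (abs_sub_lt_iff.2 ⟨by linarith, by linarith⟩)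
  have hb : b = a + d :=
    AddCircle.eq_of_coe_eq_of_abs_sub_lt hab (abs_sub_lt_iff.2 ⟨by linarith, by linarith⟩)
  linarith

theorem stmt_18_general (R h₁ h₂ : ℝ) :
    ¬ ∃ x : Fin 8 → ℝ,
        (∀ i, x i ∈ Set.Ico (0 : ℝ) 1) ∧
        (∀ i : Fin 7, x i.succ = doubleRotation R h₁ h₂ (x i.castSucc)) ∧
        x 1 ∈ Set.Ico 0 R ∧ x 3 ∈ Set.Ico 0 R ∧ x 6 ∈ Set.Ico 0 R ∧
        x 7 ∈ Set.Ico 0 R ∧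
        x 0 ∈ Set.Ico R 1 ∧ x 2 ∈ Set.Ico R 1 ∧ x 4 ∈ Set.Ico R 1 ∧
        x 5 ∈ Set.Ico R 1 := by
  rintro ⟨x, -, hx, ⟨h1₀, h1R⟩, ⟨h3₀, h3R⟩, ⟨-, h6R⟩, h7, ⟨h0R, h0₁⟩, ⟨h2R, h2₁⟩, ⟨h4R, h4₁⟩,
    h5⟩
  have h31 : x 3 - x 1 = x 2 - x 0 :=
    AddCircle.eq_of_coe_eq_of_abs_sub_lt
      (coe_orbit_succ_sub_succ hx 0 2 (iff_of_false h0R.not_gt h2R.not_gt))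
      (abs_sub_lt_iff.2 ⟨by linarith, by linarith⟩)
  have h42 : x 4 - x 2 = x 3 - x 1 :=
    AddCircle.eq_of_coe_eq_of_abs_sub_lt (coe_orbit_succ_sub_succ hx 1 3 (iff_of_true h1R h3R))
      (abs_sub_lt_iff.2 ⟨by linarith, by linarith⟩)
  set d := x 2 - x 0
  have h35 : (x 5 : UnitAddCircle) = (x 3 + d : ℝ) := by
    have h51 : ((x 5 - x 1 : ℝ) : UnitAddCircle) = (x 4 - x 0 : ℝ) :=
      coe_orbit_succ_sub_succ hx 0 4 (iff_of_false h0R.not_gt h4R.not_gt)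
    rw [show x 3 + d = (x 4 - x 0) + x 1 by linarith, AddCircle.coe_add, ← h51, AddCircle.coe_sub]
    abel
  have h37 : (x 7 : UnitAddCircle) = (x 3 + 2 * d : ℝ) := by
    have h72 : ((x 7 - x 2 : ℝ) : UnitAddCircle) = (x 6 - x 1 : ℝ) :=
      coe_orbit_succ_sub_succ hx 1 6 (iff_of_true h1R h6R)
    have h61 : ((x 6 - x 1 : ℝ) : UnitAddCircle) = (x 5 - x 0 : ℝ) :=
      coe_orbit_succ_sub_succ hx 0 5 (iff_of_false h0R.not_gt h5.1.not_gt)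
    rw [show x 3 + 2 * d = (x 3 + d) + (x 2 - x 0) by ring, AddCircle.coe_add, ← h35]
    simp only [AddCircle.coe_sub] at h72 h61 ⊢
    linear_combination (norm := abel) h72 + h61
  have hd : 2 * |d| < 1 - R := by
    rw [← abs_two, ← abs_mul, show 2 * d = x 4 - x 0 by linarith]
    exact abs_sub_lt_iff.2 ⟨by linarith, by linarith⟩
  exact hd.not_ge (one_sub_le_two_mul_abs_of_progression ⟨h3₀, h3R⟩ h5 h7 h35 h37)

/-- No double rotation has an orbit segment `x₁, …, x₈` in
`[0,1)` with `x₂, x₄, x₇, x₈ ∈ [0,R)` and `x₁, x₃, x₅, x₆ ∈ [R,1)`; i.e. the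
binary word `21212211` cannot be produced by any double rotation. -/
theorem stmt_18 (R h₁ h₂ : ℝ) (hR0 : 0 < R) (hR1 : R < 1) :
    ¬ ∃ x : Fin 8 → ℝ,
        (∀ i, x i ∈ Set.Ico (0 : ℝ) 1) ∧
        (∀ i : Fin 7, x i.succ = doubleRotation R h₁ h₂ (x i.castSucc)) ∧
        x 1 ∈ Set.Ico 0 R ∧ x 3 ∈ Set.Ico 0 R ∧ x 6 ∈ Set.Ico 0 R ∧
        x 7 ∈ Set.Ico 0 R ∧
        x 0 ∈ Set.Ico R 1 ∧ x 2 ∈ Set.Ico R 1 ∧ x 4 ∈ Set.Ico R 1 ∧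
        x 5 ∈ Set.Ico R 1 :=
  stmt_18_general R h₁ h₂
end
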